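/- Let d = 1 and let K(t,x) = (4πt)^{-1/2} exp(−x²/(4t)) be the Gaussian heat kernel on ℝ. Let a : ℝ → [0,∞) be continuous, not identically zero, and suppose there exist constants c₂ > 0 and R > 0 with a(x) ≤ c₂·|x|^{-2} for all |x| ≥ R. Let 1 < p ≤ 2, κ > 0, and let u₀ : ℝ → [0,∞) be bounded, continuous, and not identically zero. Then there is no measurable function v : (0,∞) × ℝ → [0,∞), finite everywhere, satisfying for all t > 0 and x ∈ ℝ the inequality v(t,x) ≥ ∫_ℝ K(t,x−y) u₀(y) dy + κ ∫₀ᵗ ∫_ℝ K(t−s,x−y) a(y) v(s,y)^p dy ds. -/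

import Mathlib

open MeasureTheory ENNReal

/-- The Gaussian heat kernel on `ℝ`. -/
noncomputable def heatKernel1 (t x : ℝ) : ℝ :=
  (4 * Real.pi * t) ^ (-(1 : ℝ) / 2) * Real.exp (-x ^ 2 / (4 * t))

open Set

namespace NoGlob

lemma setLIntegral_mono_on {s : Set ℝ} (hs : MeasurableSet s) {f g : ℝ → ℝ≥0∞}
    (h : ∀ x ∈ s, f x ≤ g x) : ∫⁻ x in s, f x ≤ ∫⁻ x in s, g x :=
  lintegral_mono_ae ((ae_restrict_iff' hs).2 (Filter.Eventually.of_forall h))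

lemma fourpi_pos : (0:ℝ) < 4 * Real.pi := by positivity

/-- prefactor comparison -/
lemma hk_prefactor_le {τ t : ℝ} (hτ : 0 < τ) (hle : τ ≤ t) :
    (4 * Real.pi * t) ^ (-(1:ℝ)/2) ≤ (4 * Real.pi * τ) ^ (-(1:ℝ)/2) := by
  have h1 : (0:ℝ) < 4 * Real.pi * τ := by positivity
  have h2 : (0:ℝ) < 4 * Real.pi * t := by nlinarith [Real.pi_pos]
  rw [show (-(1:ℝ)/2) = -(1/2) by ring, Real.rpow_neg h1.le, Real.rpow_neg h2.le]
  apply inv_anti₀ (Real.rpow_pos_of_pos h1 _)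
  apply Real.rpow_le_rpow h1.le (by nlinarith [Real.pi_pos]) (by norm_num)

/-- kernel lower bound for times ≥ 1 and space displacement with square ≤ c -/
lemma hk_lb {τ z c : ℝ} (hτ : 1 ≤ τ) (hz : z ^ 2 ≤ c) :
    (4 * Real.pi * τ) ^ (-(1:ℝ)/2) * Real.exp (-c / 4) ≤ heatKernel1 τ z := by
  unfold heatKernel1
  have hτ0 : (0:ℝ) < τ := by linarith
  have hc : 0 ≤ c := le_trans (sq_nonneg z) hz
  apply mul_le_mul_of_nonneg_left _ (Real.rpow_nonneg (by positivity) _)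
  apply Real.exp_le_exp.2
  rw [div_le_div_iff₀ (by norm_num) (by positivity)] at *
  nlinarith [sq_nonneg z]

lemma hk_lb' {τ z : ℝ} (hτ0 : 0 < τ) (hz : z ^ 2 ≤ τ) :
    (4 * Real.pi * τ) ^ (-(1:ℝ)/2) * Real.exp (-(1:ℝ)/4) ≤ heatKernel1 τ z := by
  unfold heatKernel1
  apply mul_le_mul_of_nonneg_left _ (Real.rpow_nonneg (by positivity) _)
  apply Real.exp_le_exp.2
  rw [div_le_div_iff₀ (by norm_num) (by positivity)]
  nlinarith

lemma hk_nonneg {τ z : ℝ} (hτ : 0 < τ) : 0 ≤ heatKernel1 τ z := by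
  unfold heatKernel1
  positivity

lemma contOn_integrand {T M q : ℝ} (hT : 0 < T) (hq : 0 ≤ q) :
    ContinuousOn (fun s => (Real.log s - Real.log T) ^ q / s) (Icc T M) := by
  have hcomp : ContinuousOn (fun u : ℝ => u ^ q) (Ici 0) := fun u _ =>
    (Real.continuousAt_rpow_const u q (Or.inr hq)).continuousWithinAt
  have hlog : ContinuousOn (fun s : ℝ => Real.log s - Real.log T) (Icc T M) := fun s hs =>
    ((Real.continuousAt_log (lt_of_lt_of_le hT hs.1).ne').continuousWithinAt).sub
      continuousWithinAt_const
  apply ContinuousOn.div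
  · exact hcomp.comp hlog (fun s hs => by
      simp only [mem_Ici, sub_nonneg]; exact Real.log_le_log hT hs.1)
  · exact continuousOn_id
  · intro s hs; exact (lt_of_lt_of_le hT hs.1).ne' 

/-- FTC computation for the iteration integral -/
lemma ftc_log_rpow {T M q : ℝ} (hT : 0 < T) (hTM : T ≤ M) (hq : 0 ≤ q) :
    ∫ s in T..M, (Real.log s - Real.log T) ^ q / s
      = (Real.log M - Real.log T) ^ (q + 1) / (q + 1) := by
  have hq1 : (1:ℝ) ≤ q + 1 := by linarith
  have hderiv : ∀ s ∈ uIcc T M,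
      HasDerivAt (fun u => (Real.log u - Real.log T) ^ (q+1) / (q+1))
        ((Real.log s - Real.log T) ^ q / s) s := by
    intro s hs
    rw [uIcc_of_le hTM] at hs
    have hs0 : 0 < s := lt_of_lt_of_le hT hs.1
    have h1 : HasDerivAt (fun u : ℝ => Real.log u - Real.log T) (1/s) s := by
      simpa using (Real.hasDerivAt_log hs0.ne').sub_const (Real.log T)
    have h2 : HasDerivAt (fun u : ℝ => u ^ (q+1)) ((q+1) * (Real.log s - Real.log T) ^ q)
        (Real.log s - Real.log T) := by
      simpa using Real.hasDerivAt_rpow_const (x := Real.log s - Real.log T) (p := q+1)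
        (Or.inr hq1)
    have := (h2.comp s h1).div_const (q+1)
    convert this using 1
    · rfl
    · rfl
    · rfl
    · field_simp
  rw [intervalIntegral.integral_eq_sub_of_hasDerivAt hderiv ?_]
  · rw [show Real.log T - Real.log T = 0 by ring]
    rw [Real.zero_rpow (by positivity)]
    simp
  · apply ContinuousOn.intervalIntegrable
    rw [uIcc_of_le hTM]
    exact contOn_integrand hT hq


lemma lint_log_rpow {T M q : ℝ} (hT : 0 < T) (hTM : T ≤ M) (hq : 0 ≤ q) :
    ENNReal.ofReal ((Real.log M - Real.log T) ^ (q+1) / (q+1))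
      ≤ ∫⁻ s in Ioo T M, ENNReal.ofReal ((Real.log s - Real.log T) ^ q / s) := by
  have hint : IntegrableOn (fun s => (Real.log s - Real.log T) ^ q / s) (Ioo T M) := by
    apply IntegrableOn.mono_set _ Ioo_subset_Icc_self
    exact (contOn_integrand hT hq).integrableOn_Icc
  have hnn : 0 ≤ᶠ[ae (volume.restrict (Ioo T M))]
      (fun s => (Real.log s - Real.log T) ^ q / s) := by
    rw [Filter.EventuallyLE, ae_restrict_iff' measurableSet_Ioo]
    apply Filter.Eventually.of_forall
    intro s hs
    have hs0 : 0 < s := lt_of_lt_of_le hT hs.1.le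
    have : 0 ≤ Real.log s - Real.log T := by
      simp only [sub_nonneg]; exact Real.log_le_log hT hs.1.le
    positivity
  rw [← ofReal_integral_eq_lintegral_ofReal hint hnn]
  apply ENNReal.ofReal_le_ofReal
  rw [← integral_Ioc_eq_integral_Ioo, ← intervalIntegral.integral_of_le hTM,
    ftc_log_rpow hT hTM hq]

end NoGlob
namespace NoGlob

noncomputable def mSeq (p : ℝ) : ℕ → ℝ
  | 0 => 0
  | k+1 => p * mSeq p k + 1

noncomputable def CSeq (p c₀ c₁ : ℝ) : ℕ → ℝ
  | 0 => c₀
  | k+1 => c₁ * CSeq p c₀ c₁ k ^ p / (p * mSeq p k + 1)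

variable {p c₀ c₁ : ℝ}

lemma mSeq_nonneg (hp : 0 ≤ p) (k : ℕ) : 0 ≤ mSeq p k := by
  induction k with
  | zero => simp [mSeq]
  | succ k ih => simp only [mSeq]; positivity

lemma mSeq_succ_ge_one (hp : 0 ≤ p) (k : ℕ) : 1 ≤ mSeq p (k+1) := by
  have := mSeq_nonneg hp k
  simp only [mSeq]
  nlinarith

lemma mSeq_ge_pow (hp : 1 ≤ p) (k : ℕ) : p ^ k ≤ mSeq p (k+1) := by
  induction k with
  | zero => simp [mSeq]
  | succ k ih =>
    simp only [mSeq] at ih ⊢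
    have hpk : (0:ℝ) ≤ p ^ k := by positivity
    calc p ^ (k+1) = p * p ^ k := by ring
    _ ≤ p * (p * mSeq p k + 1) := by nlinarith
    _ ≤ p * (p * mSeq p k + 1) + 1 := by linarith

lemma mSeq_le_pow3 (hp : 0 ≤ p) (hp2 : p ≤ 2) (k : ℕ) : mSeq p k ≤ 3 ^ k := by
  induction k with
  | zero => simp [mSeq]
  | succ k ih =>
    simp only [mSeq]
    have h0 := mSeq_nonneg hp k
    have h3 : (0:ℝ) < 3 ^ k := by positivity
    have h1 : (1:ℝ) ≤ 3 ^ k := one_le_pow₀ (by norm_num)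
    calc p * mSeq p k + 1 ≤ 2 * 3 ^ k + 1 := by nlinarith
    _ ≤ 3 ^ (k+1) := by rw [pow_succ]; nlinarith

lemma CSeq_pos (hp : 0 ≤ p) (hc₀ : 0 < c₀) (hc₁ : 0 < c₁) (k : ℕ) :
    0 < CSeq p c₀ c₁ k := by
  induction k with
  | zero => simpa [CSeq]
  | succ k ih =>
    have hm := mSeq_nonneg hp k
    have : 0 < CSeq p c₀ c₁ k ^ p := Real.rpow_pos_of_pos ih p
    simp only [CSeq]
    positivity

lemma CSeq_log_lb (hp1 : 1 < p) (hp2 : p ≤ 2) (hc₀ : 0 < c₀) (hc₁ : 0 < c₁) :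
    ∃ G : ℝ, 0 < G ∧ ∀ k : ℕ, -G * p ^ k ≤ Real.log (CSeq p c₀ c₁ k) := by
  have hp0 : (0:ℝ) ≤ p := by linarith
  have hp1' : (0:ℝ) < p - 1 := by linarith
  set c₅ : ℝ := Real.log 3 with hc₅def
  have hc₅ : 0 ≤ c₅ := Real.log_nonneg (by norm_num)
  set c₄ : ℝ := |Real.log c₁| + Real.log 3 with hc₄def
  have hc₄ : 0 ≤ c₄ := by positivity
  set H : ℝ := c₅ / (p-1) with hHdef
  set J : ℝ := (c₄ + H) / (p-1) with hJdef
  have hH : 0 ≤ H := by positivity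
  have hJ : 0 ≤ J := by positivity
  have eH : (p-1) * H = c₅ := by rw [hHdef]; field_simp
  have eJ : (p-1) * J = c₄ + H := by rw [hJdef]; field_simp
  refine ⟨|Real.log c₀| + J + 1, by positivity, ?_⟩
  set G : ℝ := |Real.log c₀| + J + 1 with hGdef
  -- recursion bound on logs
  have hrec : ∀ k : ℕ, p * Real.log (CSeq p c₀ c₁ k) - (c₄ + c₅ * k)
      ≤ Real.log (CSeq p c₀ c₁ (k+1)) := by
    intro k
    have hCk := CSeq_pos hp0 hc₀ hc₁ k
    have hm1 : (1:ℝ) ≤ p * mSeq p k + 1 := by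
      have := mSeq_nonneg hp0 k; nlinarith
    have hm0 : (0:ℝ) < p * mSeq p k + 1 := by linarith
    have hlog : Real.log (CSeq p c₀ c₁ (k+1))
        = Real.log c₁ + p * Real.log (CSeq p c₀ c₁ k) - Real.log (p * mSeq p k + 1) := by
      simp only [CSeq]
      rw [Real.log_div (by positivity) (by positivity), Real.log_mul (by positivity)
        (by positivity), Real.log_rpow hCk]
    rw [hlog]
    have hub : Real.log (p * mSeq p k + 1) ≤ Real.log 3 + c₅ * k := by
      have hmle := mSeq_le_pow3 hp0 hp2 k
      have hm00 := mSeq_nonneg hp0 k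
      have h3 : (1:ℝ) ≤ 3 ^ k := one_le_pow₀ (by norm_num)
      have h1 : p * mSeq p k + 1 ≤ (3:ℝ) ^ (k+1) := by
        rw [pow_succ]; nlinarith
      have h2 : Real.log (p * mSeq p k + 1) ≤ Real.log ((3:ℝ)^(k+1)) :=
        Real.log_le_log hm0 h1
      rw [Real.log_pow] at h2
      push_cast at h2
      simp only [hc₅def]
      linarith
    have h4 : -|Real.log c₁| ≤ Real.log c₁ := neg_abs_le _
    have habs : c₄ = |Real.log c₁| + Real.log 3 := hc₄def
    linarith
  intro k
  have key : ∀ k : ℕ, -G * p ^ k + H * k + J ≤ Real.log (CSeq p c₀ c₁ k) := by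
    intro k
    induction k with
    | zero =>
      simp only [CSeq, pow_zero, Nat.cast_zero]
      have := neg_abs_le (Real.log c₀)
      simp only [hGdef]
      linarith
    | succ k ih =>
      have h1 : p * (-G * p^k + H * k + J) ≤ p * Real.log (CSeq p c₀ c₁ k) :=
        mul_le_mul_of_nonneg_left ih hp0
      have e3 : p * (H * (k:ℝ)) = H * k + c₅ * k := by linear_combination (k:ℝ) * eH
      have e4 : p * J = J + H + c₄ := by linear_combination eJ
      have h2 := hrec k
      have hps : (p:ℝ) ^ (k+1) = p * p ^ k := by ring
      push_cast
      rw [hps]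
      push_cast at h1 h2
      linarith
  have hk := key k
  have : 0 ≤ H * k + J := by positivity
  linarith

lemma log4_ge_one : (1:ℝ) ≤ Real.log 4 := by
  rw [Real.le_log_iff_exp_le (by norm_num)]
  have := Real.exp_one_lt_d9
  linarith

set_option maxHeartbeats 1000000 in
lemma CSeq_unbounded (hp1 : 1 < p) (hp2 : p ≤ 2) (hc₀ : 0 < c₀) (hc₁ : 0 < c₁) (A : ℝ) :
    ∃ k : ℕ, 1 ≤ k ∧
      A ≤ CSeq p c₀ c₁ k * ((16:ℝ)^k + 2) ^ (-(1:ℝ)/2) * ((k:ℝ) * Real.log 4) ^ (mSeq p k) := by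
  have hp0 : (0:ℝ) ≤ p := by linarith
  have hl4 : (0:ℝ) < Real.log 4 := Real.log_pos (by norm_num)
  obtain ⟨G, hG, hlb⟩ := CSeq_log_lb hp1 hp2 hc₀ hc₁
  set α : ℝ := Real.log (max A 1) with hαdef
  have hα : 0 ≤ α := Real.log_nonneg (le_max_right _ _)
  set σ : ℝ := Real.sqrt p - 1 with hσdef
  have hσ : 0 < σ := by
    have : (1:ℝ) < Real.sqrt p := by
      have := Real.sqrt_lt_sqrt (by norm_num : (0:ℝ) ≤ 1) hp1
      simpa using this
    simp only [hσdef]; linarith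
  set L : ℝ := Real.log 16 with hLdef
  have hL : 0 ≤ L := Real.log_nonneg (by norm_num)
  obtain ⟨n, hn⟩ := exists_nat_ge (max (max 1 ((α + 4*L + 1)/σ^2)) (Real.exp (p*G+1)/Real.log 4))
  have hn1 : (1:ℝ) ≤ n := le_trans (le_max_of_le_left (le_max_left _ _)) hn
  have hn2 : (α + 4*L + 1)/σ^2 ≤ n := le_trans (le_max_of_le_left (le_max_right _ _)) hn
  have hn3 : Real.exp (p*G+1)/Real.log 4 ≤ n := le_trans (le_max_right _ _) hn
  clear_value α σ L
  refine ⟨n+1, by omega, ?_⟩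
  -- names
  set k : ℕ := n + 1 with hkdef
  clear_value k
  have hCk := CSeq_pos hp0 hc₀ hc₁ k
  have hk1 : 1 ≤ k := by omega
  have hkR : (0:ℝ) < (k:ℝ) := by exact_mod_cast Nat.pos_of_ne_zero (by omega)
  have hkl4 : (0:ℝ) < (k:ℝ) * Real.log 4 := by positivity
  have h16 : (0:ℝ) < (16:ℝ)^k + 2 := by positivity
  have hX : (0:ℝ) < CSeq p c₀ c₁ k * ((16:ℝ)^k + 2) ^ (-(1:ℝ)/2) * ((k:ℝ) * Real.log 4) ^ (mSeq p k) := by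
    have := Real.rpow_pos_of_pos h16 (-(1:ℝ)/2)
    have := Real.rpow_pos_of_pos hkl4 (mSeq p k)
    positivity
  have hA1 : (0:ℝ) < max A 1 := lt_of_lt_of_le one_pos (le_max_right _ _)
  refine le_trans (le_max_left A 1) ?_
  rw [← Real.log_le_log_iff hA1 hX]
  -- expand log of the product
  have hlogX : Real.log (CSeq p c₀ c₁ k * ((16:ℝ)^k + 2) ^ (-(1:ℝ)/2) * ((k:ℝ) * Real.log 4) ^ (mSeq p k))
      = Real.log (CSeq p c₀ c₁ k) + (-(1:ℝ)/2) * Real.log ((16:ℝ)^k + 2)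
        + mSeq p k * Real.log ((k:ℝ) * Real.log 4) := by
    rw [Real.log_mul (by positivity) (by positivity), Real.log_mul hCk.ne' (by positivity),
      Real.log_rpow h16, Real.log_rpow hkl4]
  rw [hlogX]
  -- individual bounds
  have hb1 : -G * p^k ≤ Real.log (CSeq p c₀ c₁ k) := hlb k
  have hb2 : Real.log ((16:ℝ)^k + 2) ≤ (k+1) * L := by
    have h1 : (16:ℝ)^k + 2 ≤ 16^(k+1) := by
      have h0 : (1:ℝ) ≤ 16^k := one_le_pow₀ (by norm_num)
      have hps : (16:ℝ)^(k+1) = 16^k * 16 := pow_succ 16 k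
      rw [hps]; nlinarith
    have h2 := Real.log_le_log h16 h1
    rw [Real.log_pow] at h2
    push_cast at h2 ⊢
    simpa [hLdef] using h2
  have hθ : p * G + 1 ≤ Real.log ((k:ℝ) * Real.log 4) := by
    rw [Real.le_log_iff_exp_le hkl4]
    rw [div_le_iff₀ hl4] at hn3
    have : (n:ℝ) * Real.log 4 ≤ (k:ℝ) * Real.log 4 := by
      have h : (n:ℝ) ≤ (k:ℝ) := by rw [hkdef]; push_cast; linarith
      nlinarith [h, hl4]
    linarith
  have hθ0 : 0 ≤ Real.log ((k:ℝ) * Real.log 4) := by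
    have : 0 < p * G := mul_pos (by linarith) hG
    linarith
  have hmk : p ^ n ≤ mSeq p k := by rw [hkdef]; exact mSeq_ge_pow hp1.le n
  have hb3 : p^n * Real.log ((k:ℝ) * Real.log 4) ≤ mSeq p k * Real.log ((k:ℝ) * Real.log 4) :=
    mul_le_mul_of_nonneg_right hmk hθ0
  -- Bernoulli: p^n ≥ (1 + nσ)^2
  have hbern : (1 + (n:ℝ)*σ)^2 ≤ p^n := by
    have h1 : 1 + (n:ℝ)*σ ≤ (1+σ)^n := one_add_mul_le_pow (by linarith) n
    have h2 : (0:ℝ) ≤ 1 + (n:ℝ)*σ := by positivity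
    have h3 : (1 + (n:ℝ)*σ)^2 ≤ ((1+σ)^n)^2 := by
      apply pow_le_pow_left₀ h2 h1
    have h4 : ((1+σ)^n)^2 = ((1+σ)^2)^n := pow_right_comm _ _ _
    have h5 : (1+σ)^2 = p := by
      have hsq := Real.sq_sqrt (by linarith : (0:ℝ) ≤ p)
      simp only [hσdef]
      linear_combination hsq
    rw [h4, h5] at h3
    exact h3
  -- quadratic beats linear
  have hquad : α + 3*L + (n:ℝ)*L ≤ (n:ℝ)^2 * σ^2 := by
    rw [div_le_iff₀ (by positivity)] at hn2
    have h1 : (α + 4*L + 1) * (n:ℝ) ≤ ((n:ℝ)*σ^2) * n :=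
      mul_le_mul_of_nonneg_right hn2 (by positivity)
    have h2 : 0 ≤ α * ((n:ℝ) - 1) := mul_nonneg hα (by linarith)
    have h3 : 0 ≤ L * ((n:ℝ) - 1) := mul_nonneg hL (by linarith)
    have hn0 : (0:ℝ) ≤ n := by positivity
    linarith
  have hexp : (n:ℝ)^2*σ^2 ≤ (1+(n:ℝ)*σ)^2 := by
    have h0 : 0 ≤ (n:ℝ)*σ := by positivity
    nlinarith [h0]
  -- put it together
  have hfin : α ≤ p^n * 1 - ((k:ℝ)+1) * L / 2 + 0 := by
    have hk2 : ((k:ℝ)+1) * L / 2 ≤ ((n:ℝ)+2) * L := by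
      have : (k:ℝ) = (n:ℝ) + 1 := by rw [hkdef]; push_cast; ring
      rw [this]
      have h0 : 0 ≤ ((n:ℝ)+2) * L := by positivity
      linarith
    have hn0 : (0:ℝ) ≤ n := by positivity
    have hLn : 0 ≤ L * (n:ℝ) := by positivity
    nlinarith [hquad, hexp, hbern]
  have hGpk : G * p^k = (p*G) * p^n := by rw [hkdef, pow_succ]; ring
  have hsplit : p^n * Real.log ((k:ℝ)*Real.log 4) - (p*G)*p^n ≥ p^n * 1 := by
    have hp' : (0:ℝ) < p^n := by positivity
    have h := mul_le_mul_of_nonneg_left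
      (show (1:ℝ) ≤ Real.log ((k:ℝ)*Real.log 4) - p*G by linarith) hp'.le
    nlinarith [h]
  calc Real.log (max A 1) = α := hαdef.symm
    _ ≤ p^n * 1 - ((k:ℝ)+1)*L/2 + 0 := hfin
    _ ≤ (p^n * Real.log ((k:ℝ)*Real.log 4) - (p*G)*p^n) - ((k:ℝ)+1)*L/2 + 0 := by linarith
    _ ≤ Real.log (CSeq p c₀ c₁ k) + (-(1:ℝ)/2) * Real.log ((16:ℝ)^k + 2)
        + mSeq p k * Real.log ((k:ℝ) * Real.log 4) := by
      have hb1' := hb1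
      rw [show -G * p^k = -((p*G)*p^n) by rw [hkdef, pow_succ]; ring] at hb1'
      linarith [hb2, hb3]

lemma phase2_step_real {p c₆ G H : ℝ} (hp1 : 1 < p) (hc₆ : 0 < c₆)
    (hH : (p-1)*H = Real.log 4) (hG : (p-1)*G = max 0 (-Real.log c₆) + H) (j : ℕ) :
    Real.exp (G + (j+1)*H) ≤ c₆ * (1/4)^j * Real.exp (G + j*H) ^ p := by
  have h4 : ((1/4:ℝ))^j = Real.exp ((j:ℝ) * -Real.log 4) := by
    rw [Real.exp_nat_mul, ← Real.log_inv]
    rw [Real.exp_log (by norm_num)]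
    norm_num
  have hxp : Real.exp (G + j*H) ^ p = Real.exp ((G + j*H) * p) := (Real.exp_mul _ _).symm
  rw [h4, hxp, ← Real.exp_log hc₆, ← Real.exp_add, ← Real.exp_add]
  apply Real.exp_le_exp.2
  have hν : -Real.log c₆ ≤ max 0 (-Real.log c₆) := le_max_right _ _
  have e3 : p * ((j:ℝ)*H) = (j:ℝ)*H + (j:ℝ)*Real.log 4 := by linear_combination (j:ℝ)*hH
  nlinarith [hG, hH, hν, e3]

end NoGlob

namespace NoGlob
open Real

lemma mass_lb {τ r x : ℝ} (hτ0 : 0 < τ) (hτ2 : τ ≤ 2) (hr0 : 0 < r) (hr1 : r ≤ 1) :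
    ENNReal.ofReal (2 * Real.exp (-(1:ℝ)/4) * (8*Real.pi)^(-(1:ℝ)/2) * r)
      ≤ ∫⁻ y in Icc (x-r) (x+r), ENNReal.ofReal (heatKernel1 τ (x-y)) := by
  set ρ : ℝ := min r (Real.sqrt τ) with hρdef
  have hsτ : 0 < Real.sqrt τ := Real.sqrt_pos.2 hτ0
  have hρ0 : 0 < ρ := lt_min hr0 hsτ
  have hρr : ρ ≤ r := min_le_left _ _
  have hsub : Icc (x-ρ) (x+ρ) ⊆ Icc (x-r) (x+r) :=
    Icc_subset_Icc (by linarith) (by linarith)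
  have hkb : ∀ y ∈ Icc (x-ρ) (x+ρ),
      ENNReal.ofReal ((4*Real.pi*τ)^(-(1:ℝ)/2) * Real.exp (-(1:ℝ)/4))
        ≤ ENNReal.ofReal (heatKernel1 τ (x-y)) := by
    intro y hy
    apply ENNReal.ofReal_le_ofReal
    apply hk_lb' hτ0
    have h1 : |x - y| ≤ ρ := by
      rw [abs_le]; constructor <;> [linarith [hy.2]; linarith [hy.1]]
    have h2 : (x-y)^2 ≤ ρ^2 := by
      rw [← sq_abs]
      exact pow_le_pow_left₀ (abs_nonneg _) h1 2
    have h3 : ρ^2 ≤ τ := by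
      have : ρ ≤ Real.sqrt τ := min_le_right _ _
      calc ρ^2 ≤ Real.sqrt τ ^ 2 := pow_le_pow_left₀ hρ0.le this 2
      _ = τ := Real.sq_sqrt hτ0.le
    linarith
  calc ENNReal.ofReal (2 * Real.exp (-(1:ℝ)/4) * (8*Real.pi)^(-(1:ℝ)/2) * r)
      ≤ ENNReal.ofReal (((4*Real.pi*τ)^(-(1:ℝ)/2) * Real.exp (-(1:ℝ)/4)) * (2*ρ)) := by
        apply ENNReal.ofReal_le_ofReal
        -- key real inequality: (8π)^(-1/2) r ≤ (4πτ)^(-1/2) ρ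
        have key : (8*Real.pi)^(-(1:ℝ)/2) * r ≤ (4*Real.pi*τ)^(-(1:ℝ)/2) * ρ := by
          rcases le_total r (Real.sqrt τ) with h | h
          · -- ρ = r ; use τ ≤ 2 : (4πτ)^(-1/2) ≥ (8π)^(-1/2)
            have hρr' : ρ = r := min_eq_left h
            rw [hρr']
            apply mul_le_mul_of_nonneg_right _ hr0.le
            have h8 : (0:ℝ) < 4*Real.pi*τ := by positivity
            -- (4πτ) ≤ 8π  so  (8π)^(-1/2) ≤ (4πτ)^(-1/2)
            have hle : 4*Real.pi*τ ≤ 8*Real.pi := by nlinarith [Real.pi_pos]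
            rw [show (-(1:ℝ)/2) = -(1/2) by ring, Real.rpow_neg h8.le,
              Real.rpow_neg (by positivity : (0:ℝ) ≤ 8*Real.pi)]
            exact inv_anti₀ (Real.rpow_pos_of_pos h8 _)
              (Real.rpow_le_rpow h8.le hle (by norm_num))
          · -- ρ = √τ : (4πτ)^(-1/2) √τ = (4π)^(-1/2) ≥ (8π)^(-1/2) ≥ (8π)^(-1/2) r
            have hρr' : ρ = Real.sqrt τ := min_eq_right h
            rw [hρr']
            have hid : (4*Real.pi*τ)^(-(1:ℝ)/2) * Real.sqrt τ = (4*Real.pi)^(-(1:ℝ)/2) := by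
              rw [Real.sqrt_eq_rpow,
                Real.mul_rpow (by positivity : (0:ℝ) ≤ 4*Real.pi) hτ0.le]
              rw [show (-(1:ℝ)/2) = -(1/2) by ring, Real.rpow_neg hτ0.le]
              field_simp
            rw [hid]
            have h1 : (8*Real.pi)^(-(1:ℝ)/2) * r ≤ (8*Real.pi)^(-(1:ℝ)/2) * 1 :=
              mul_le_mul_of_nonneg_left hr1 (Real.rpow_nonneg (by positivity) _)
            have h2 : (8*Real.pi)^(-(1:ℝ)/2) ≤ (4*Real.pi)^(-(1:ℝ)/2) := by
              rw [show (-(1:ℝ)/2) = -(1/2) by ring,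
                Real.rpow_neg (by positivity : (0:ℝ) ≤ 8*Real.pi),
                Real.rpow_neg (by positivity : (0:ℝ) ≤ 4*Real.pi)]
              exact inv_anti₀ (Real.rpow_pos_of_pos (by positivity) _)
                (Real.rpow_le_rpow (by positivity) (by nlinarith [Real.pi_pos]) (by norm_num))
            linarith
        have hexp : (0:ℝ) < Real.exp (-(1:ℝ)/4) := Real.exp_pos _
        nlinarith [key, Real.rpow_nonneg (show (0:ℝ) ≤ 8*Real.pi by positivity) (-(1:ℝ)/2),
          Real.rpow_pos_of_pos (show (0:ℝ) < 4*Real.pi*τ by positivity) (-(1:ℝ)/2)]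
    _ = ENNReal.ofReal ((4*Real.pi*τ)^(-(1:ℝ)/2) * Real.exp (-(1:ℝ)/4)) * volume (Icc (x-ρ) (x+ρ)) := by
        rw [Real.volume_Icc, ← ENNReal.ofReal_mul (by positivity)]
        ring_nf
    _ = ∫⁻ _ in Icc (x-ρ) (x+ρ), ENNReal.ofReal ((4*Real.pi*τ)^(-(1:ℝ)/2) * Real.exp (-(1:ℝ)/4)) := by
        rw [setLIntegral_const]
    _ ≤ ∫⁻ y in Icc (x-ρ) (x+ρ), ENNReal.ofReal (heatKernel1 τ (x-y)) :=
        setLIntegral_mono_on measurableSet_Icc hkb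
    _ ≤ ∫⁻ y in Icc (x-r) (x+r), ENNReal.ofReal (heatKernel1 τ (x-y)) :=
        lintegral_mono_set hsub

end NoGlob

namespace NoGlob

lemma rpow_negHalf_anti {x y : ℝ} (hx : 0 < x) (hxy : x ≤ y) :
    y ^ (-(1:ℝ)/2) ≤ x ^ (-(1:ℝ)/2) := by
  rw [show (-(1:ℝ)/2) = -(1/2) by ring, Real.rpow_neg hx.le,
    Real.rpow_neg (by linarith : (0:ℝ) ≤ y)]
  exact inv_anti₀ (Real.rpow_pos_of_pos hx _)
    (Real.rpow_le_rpow hx.le hxy (by norm_num))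

lemma pos_on_interval {f : ℝ → ℝ} (hf : Continuous f) (hnn : ∀ x, 0 ≤ f x)
    (hnt : ¬ ∀ x, f x = 0) :
    ∃ b ε δ : ℝ, 0 < ε ∧ 0 < δ ∧ δ ≤ 1 ∧ ∀ y ∈ Icc (b-δ) (b+δ), ε ≤ f y := by
  push_neg at hnt
  obtain ⟨b, hb⟩ := hnt
  have hb' : 0 < f b := (hnn b).lt_of_ne (Ne.symm hb)
  have ho : IsOpen {y | f b / 2 < f y} := isOpen_lt continuous_const hf
  obtain ⟨r, hr0, hr⟩ := Metric.isOpen_iff.1 ho b (by simpa using half_lt_self hb')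
  refine ⟨b, f b / 2, min (r/2) 1, by positivity, by positivity, min_le_right _ _, ?_⟩
  intro y hy
  have h1 : |y - b| ≤ min (r/2) 1 := by
    rw [abs_le]
    exact ⟨by linarith [hy.1], by linarith [hy.2]⟩
  have h2 : y ∈ Metric.ball b r := by
    rw [Metric.mem_ball, Real.dist_eq]
    linarith [h1.trans (min_le_left (r/2) 1), hr0]
  exact (hr h2).le

end NoGlob

open Set in
set_option maxHeartbeats 2000000 in
theorem no_global_upper_solution_dim_one
    (a : ℝ → ℝ) (hacont : Continuous a) (hann : ∀ x, 0 ≤ a x)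
    (hantriv : ¬ ∀ x, a x = 0)
    (hadecay : ∃ c₂ > (0 : ℝ), ∃ R > (0 : ℝ), ∀ x : ℝ, R ≤ |x| → a x ≤ c₂ / x ^ 2)
    (p : ℝ) (hp1 : 1 < p) (hp2 : p ≤ 2) (κ : ℝ) (hκ : 0 < κ)
    (u₀ : ℝ → ℝ) (hu₀cont : Continuous u₀) (hu₀nn : ∀ x, 0 ≤ u₀ x)
    (hu₀bdd : ∃ M : ℝ, ∀ x, u₀ x ≤ M) (hu₀ntriv : ¬ ∀ x, u₀ x = 0) :
    ¬ ∃ v : ℝ → ℝ → ℝ≥0∞,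
      Measurable (Function.uncurry v) ∧
      (∀ t, 0 < t → ∀ x : ℝ, v t x < ⊤) ∧
      (∀ t : ℝ, 0 < t → ∀ x : ℝ,
        (∫⁻ y, ENNReal.ofReal (heatKernel1 t (x - y)) * ENNReal.ofReal (u₀ y)) +
          ENNReal.ofReal κ * ∫⁻ s in Set.Ioo 0 t,
            ∫⁻ y, ENNReal.ofReal (heatKernel1 (t - s) (x - y)) *
              ENNReal.ofReal (a y) * (v s y) ^ p
        ≤ v t x) := by
  rintro ⟨v, hmeas, hfin, hineq⟩
  obtain ⟨b, ε, δ, hε, hδ0, hδ1, hIa⟩ := NoGlob.pos_on_interval hacont hann hantriv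
  obtain ⟨b₀, η, δ₀, hη, hδ₀0, hδ₀1, hJu⟩ := NoGlob.pos_on_interval hu₀cont hu₀nn hu₀ntriv
  have hπ : (0:ℝ) < Real.pi := Real.pi_pos
  have hp0 : (0:ℝ) ≤ p := by linarith
  -- Duhamel restriction
  have hduh : ∀ t x S₁ S₂ y₁ y₂ : ℝ, 0 < t → 0 ≤ S₁ → S₂ ≤ t →
      ENNReal.ofReal κ * ∫⁻ s in Set.Ioo S₁ S₂, ∫⁻ y in Set.Icc y₁ y₂,
        ENNReal.ofReal (heatKernel1 (t-s) (x-y)) * ENNReal.ofReal (a y) * v s y ^ p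
      ≤ v t x := by
    intro t x S₁ S₂ y₁ y₂ ht hS₁ hS₂
    refine le_trans (mul_le_mul_right ?_ _) (le_trans le_add_self (hineq t ht x))
    refine le_trans (lintegral_mono (fun s => setLIntegral_le_lintegral _ _)) ?_
    exact lintegral_mono_set (Set.Ioo_subset_Ioo hS₁ hS₂)
  -- base heat bound
  set D : ℝ := |b - b₀| + 2 with hDdef
  have hD0 : 0 < D := by positivity
  set c₀ : ℝ := (4*Real.pi)^(-(1:ℝ)/2) * Real.exp (-D^2/4) * η * (2*δ₀) with hc₀def
  have hc₀ : 0 < c₀ := by positivity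
  have hbase : ∀ t : ℝ, 1 ≤ t → ∀ x ∈ Set.Icc (b-δ) (b+δ),
      ENNReal.ofReal (c₀ * t ^ (-(1:ℝ)/2)) ≤ v t x := by
    intro t ht x hx
    have ht0 : (0:ℝ) < t := by linarith
    refine le_trans ?_ (le_trans le_self_add (hineq t ht0 x))
    refine le_trans ?_ (setLIntegral_le_lintegral (Set.Icc (b₀-δ₀) (b₀+δ₀)) _)
    have hker : ∀ y ∈ Set.Icc (b₀-δ₀) (b₀+δ₀),
        ENNReal.ofReal (((4*Real.pi)^(-(1:ℝ)/2) * Real.exp (-D^2/4) * η) * t ^ (-(1:ℝ)/2))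
          ≤ ENNReal.ofReal (heatKernel1 t (x-y)) * ENNReal.ofReal (u₀ y) := by
      intro y hy
      have hz : (x - y)^2 ≤ D^2 := by
        have h1 : |x - y| ≤ D := by
          have e0 : x - y = (x-b) + (b-b₀) + (b₀-y) := by ring
          have e1 : |x - b| ≤ δ := by
            rw [abs_le]; exact ⟨by linarith [hx.1], by linarith [hx.2]⟩
          have e2 : |b₀ - y| ≤ δ₀ := by
            rw [abs_le]; exact ⟨by linarith [hy.2], by linarith [hy.1]⟩
          calc |x - y| = |(x-b) + (b-b₀) + (b₀-y)| := by rw [← e0]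
          _ ≤ |x-b| + |b-b₀| + |b₀-y| := abs_add_three _ _ _
          _ ≤ D := by rw [hDdef]; linarith
        calc (x-y)^2 = |x-y|^2 := (sq_abs _).symm
        _ ≤ D^2 := pow_le_pow_left₀ (abs_nonneg _) h1 2
      have hK : ((4*Real.pi)^(-(1:ℝ)/2) * t ^ (-(1:ℝ)/2)) * Real.exp (-D^2/4)
          ≤ heatKernel1 t (x-y) := by
        have h2 := NoGlob.hk_lb (τ := t) (z := x - y) (c := D^2) ht hz
        have h4 : (4*Real.pi*t)^(-(1:ℝ)/2) = (4*Real.pi)^(-(1:ℝ)/2) * t ^ (-(1:ℝ)/2) :=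
          Real.mul_rpow (by positivity) ht0.le
        rw [h4] at h2
        exact h2
      calc ENNReal.ofReal (((4*Real.pi)^(-(1:ℝ)/2) * Real.exp (-D^2/4) * η) * t ^ (-(1:ℝ)/2))
          = ENNReal.ofReal (((4*Real.pi)^(-(1:ℝ)/2) * t ^ (-(1:ℝ)/2)) * Real.exp (-D^2/4))
            * ENNReal.ofReal η := by
            rw [← ENNReal.ofReal_mul (by positivity)]; ring_nf
      _ ≤ ENNReal.ofReal (heatKernel1 t (x-y)) * ENNReal.ofReal (u₀ y) :=
          mul_le_mul' (ENNReal.ofReal_le_ofReal hK) (ENNReal.ofReal_le_ofReal (hJu y hy))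
    calc ENNReal.ofReal (c₀ * t ^ (-(1:ℝ)/2))
        = ENNReal.ofReal (((4*Real.pi)^(-(1:ℝ)/2) * Real.exp (-D^2/4) * η) * t ^ (-(1:ℝ)/2))
          * volume (Set.Icc (b₀-δ₀) (b₀+δ₀)) := by
          rw [Real.volume_Icc, show b₀+δ₀-(b₀-δ₀) = 2*δ₀ by ring,
            ← ENNReal.ofReal_mul (by positivity), hc₀def]
          ring_nf
    _ = ∫⁻ _ in Set.Icc (b₀-δ₀) (b₀+δ₀),
          ENNReal.ofReal (((4*Real.pi)^(-(1:ℝ)/2) * Real.exp (-D^2/4) * η) * t ^ (-(1:ℝ)/2)) :=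
        (setLIntegral_const _ _).symm
    _ ≤ ∫⁻ y in Set.Icc (b₀-δ₀) (b₀+δ₀),
          ENNReal.ofReal (heatKernel1 t (x-y)) * ENNReal.ofReal (u₀ y) :=
        NoGlob.setLIntegral_mono_on measurableSet_Icc hker
  -- phase 1 constants
  set E : ℝ := (4*Real.pi)^(-(1:ℝ)/2) * Real.exp (-(2*δ)^2/4) * ε with hEdef
  have hE : 0 < E := by positivity
  set c₁ : ℝ := κ * E * (2*δ) with hc₁def
  have hc₁ : 0 < c₁ := by positivity
  -- phase 1 induction
  have hPhase1 : ∀ k : ℕ, ∀ t : ℝ, (4:ℝ)^k ≤ t → ∀ x ∈ Set.Icc (b-δ) (b+δ),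
      ENNReal.ofReal (NoGlob.CSeq p c₀ c₁ k * t ^ (-(1:ℝ)/2)
        * (Real.log t - k * Real.log 4) ^ (NoGlob.mSeq p k)) ≤ v t x := by
    intro k
    induction k with
    | zero =>
      intro t ht x hx
      simp only [NoGlob.CSeq, NoGlob.mSeq, pow_zero, Nat.cast_zero, zero_mul, sub_zero,
        Real.rpow_zero, mul_one] at ht ⊢
      exact hbase t ht x hx
    | succ k ih =>
      intro t ht x hx
      have h4k : (0:ℝ) < 4^k := by positivity
      have h4kt : 4 * (4:ℝ)^k ≤ t := by
        calc 4 * (4:ℝ)^k = 4^(k+1) := by ring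
        _ ≤ t := ht
      have ht0 : (0:ℝ) < t := by nlinarith
      have hTM : (4:ℝ)^k < t/2 := by nlinarith
      have h4k_1 : (1:ℝ) ≤ 4^k := one_le_pow₀ (by norm_num)
      set q : ℝ := p * NoGlob.mSeq p k with hqdef
      have hq0 : 0 ≤ q := mul_nonneg hp0 (NoGlob.mSeq_nonneg hp0 k)
      have hq1 : (0:ℝ) < q + 1 := by linarith
      have hCk := NoGlob.CSeq_pos hp0 hc₀ hc₁ k
      -- pointwise estimate on the region
      have hpt : ∀ s ∈ Set.Ioo ((4:ℝ)^k) (t/2), ∀ y ∈ Set.Icc (b-δ) (b+δ),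
          ENNReal.ofReal ((E * t ^ (-(1:ℝ)/2) * NoGlob.CSeq p c₀ c₁ k ^ p)
              * ((Real.log s - k * Real.log 4) ^ q / s))
            ≤ ENNReal.ofReal (heatKernel1 (t-s) (x-y)) * ENNReal.ofReal (a y) * v s y ^ p := by
        intro s hs y hy
        have hs0 : (0:ℝ) < s := lt_trans h4k hs.1
        have hs1 : (1:ℝ) ≤ s := le_trans h4k_1 hs.1.le
        have hts1 : (1:ℝ) ≤ t - s := by nlinarith [hs.2]
        have hts_t : t - s ≤ t := by linarith
        have hlog0 : 0 ≤ Real.log s - k * Real.log 4 := by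
          have h := Real.log_le_log h4k hs.1.le
          rw [Real.log_pow] at h
          linarith
        -- kernel bound
        have hker : (4*Real.pi)^(-(1:ℝ)/2) * t ^ (-(1:ℝ)/2) * Real.exp (-(2*δ)^2/4)
            ≤ heatKernel1 (t-s) (x-y) := by
          have hz : (x-y)^2 ≤ (2*δ)^2 := by
            have h1 : |x - y| ≤ 2*δ := by
              rw [abs_le]
              exact ⟨by linarith [hx.1, hy.2], by linarith [hx.2, hy.1]⟩
            calc (x-y)^2 = |x-y|^2 := (sq_abs _).symm
            _ ≤ (2*δ)^2 := pow_le_pow_left₀ (abs_nonneg _) h1 2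
          have h2 := NoGlob.hk_lb (τ := t-s) (z := x-y) (c := (2*δ)^2) hts1 hz
          have h3 := NoGlob.hk_prefactor_le (τ := t-s) (t := t) (by linarith) hts_t
          have h4 : (4*Real.pi*t)^(-(1:ℝ)/2) = (4*Real.pi)^(-(1:ℝ)/2) * t ^ (-(1:ℝ)/2) :=
            Real.mul_rpow (by positivity) ht0.le
          have hexp0 : (0:ℝ) < Real.exp (-(2*δ)^2/4) := Real.exp_pos _
          rw [h4] at h3
          nlinarith [h2, h3, hexp0,
            Real.rpow_nonneg (show (0:ℝ) ≤ 4*Real.pi*(t-s) by positivity) (-(1:ℝ)/2)]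
        -- lower bound for v^p
        have hφ0 : 0 ≤ NoGlob.CSeq p c₀ c₁ k * s ^ (-(1:ℝ)/2)
            * (Real.log s - k * Real.log 4) ^ (NoGlob.mSeq p k) := by positivity
        have hvp : ENNReal.ofReal ((NoGlob.CSeq p c₀ c₁ k * s ^ (-(1:ℝ)/2)
            * (Real.log s - k * Real.log 4) ^ (NoGlob.mSeq p k)) ^ p) ≤ v s y ^ p := by
          rw [← ENNReal.ofReal_rpow_of_nonneg hφ0 hp0]
          exact ENNReal.rpow_le_rpow (ih s hs.1.le y hy) hp0
        have hexpand : (NoGlob.CSeq p c₀ c₁ k * s ^ (-(1:ℝ)/2)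
              * (Real.log s - k * Real.log 4) ^ (NoGlob.mSeq p k)) ^ p
            = NoGlob.CSeq p c₀ c₁ k ^ p * s ^ ((-(1:ℝ)/2)*p)
              * (Real.log s - k * Real.log 4) ^ q := by
          rw [Real.mul_rpow (by positivity) (Real.rpow_nonneg hlog0 _),
            Real.mul_rpow hCk.le (Real.rpow_nonneg hs0.le _),
            ← Real.rpow_mul hs0.le, ← Real.rpow_mul hlog0, hqdef,
            mul_comm (NoGlob.mSeq p k) p]
        -- real inequality
        have hsp : s ^ (-(1:ℝ)) ≤ s ^ ((-(1:ℝ)/2)*p) :=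
          Real.rpow_le_rpow_of_exponent_le hs1 (by nlinarith)
        have hreal : (E * t ^ (-(1:ℝ)/2) * NoGlob.CSeq p c₀ c₁ k ^ p)
            * ((Real.log s - k * Real.log 4) ^ q / s)
            ≤ ((4*Real.pi)^(-(1:ℝ)/2) * t ^ (-(1:ℝ)/2) * Real.exp (-(2*δ)^2/4)) * ε
              * ((NoGlob.CSeq p c₀ c₁ k * s ^ (-(1:ℝ)/2)
                * (Real.log s - k * Real.log 4) ^ (NoGlob.mSeq p k)) ^ p) := by
          rw [hexpand, hEdef, div_eq_mul_inv ((Real.log s - (k:ℝ) * Real.log 4) ^ q) s,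
            ← Real.rpow_neg_one s]
          have hcom : (0:ℝ) ≤ (4*Real.pi)^(-(1:ℝ)/2) * Real.exp (-(2*δ)^2/4) * ε
              * t ^ (-(1:ℝ)/2) * NoGlob.CSeq p c₀ c₁ k ^ p
              * (Real.log s - k * Real.log 4) ^ q := by positivity
          calc (4*Real.pi)^(-(1:ℝ)/2) * Real.exp (-(2*δ)^2/4) * ε * t ^ (-(1:ℝ)/2)
                * NoGlob.CSeq p c₀ c₁ k ^ p
                * ((Real.log s - k * Real.log 4) ^ q * s ^ (-(1:ℝ)))
              = ((4*Real.pi)^(-(1:ℝ)/2) * Real.exp (-(2*δ)^2/4) * ε * t ^ (-(1:ℝ)/2)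
                * NoGlob.CSeq p c₀ c₁ k ^ p
                * (Real.log s - k * Real.log 4) ^ q) * s ^ (-(1:ℝ)) := by ring
          _ ≤ ((4*Real.pi)^(-(1:ℝ)/2) * Real.exp (-(2*δ)^2/4) * ε * t ^ (-(1:ℝ)/2)
                * NoGlob.CSeq p c₀ c₁ k ^ p
                * (Real.log s - k * Real.log 4) ^ q) * s ^ ((-(1:ℝ)/2)*p) :=
              mul_le_mul_of_nonneg_left hsp hcom
          _ = (4*Real.pi)^(-(1:ℝ)/2) * t ^ (-(1:ℝ)/2) * Real.exp (-(2*δ)^2/4) * ε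
              * (NoGlob.CSeq p c₀ c₁ k ^ p * s ^ ((-(1:ℝ)/2)*p)
                * (Real.log s - k * Real.log 4) ^ q) := by ring
        calc ENNReal.ofReal ((E * t ^ (-(1:ℝ)/2) * NoGlob.CSeq p c₀ c₁ k ^ p)
              * ((Real.log s - k * Real.log 4) ^ q / s))
            ≤ ENNReal.ofReal (((4*Real.pi)^(-(1:ℝ)/2) * t ^ (-(1:ℝ)/2)
                * Real.exp (-(2*δ)^2/4)) * ε
              * ((NoGlob.CSeq p c₀ c₁ k * s ^ (-(1:ℝ)/2)
                * (Real.log s - k * Real.log 4) ^ (NoGlob.mSeq p k)) ^ p)) :=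
            ENNReal.ofReal_le_ofReal hreal
        _ = ENNReal.ofReal ((4*Real.pi)^(-(1:ℝ)/2) * t ^ (-(1:ℝ)/2) * Real.exp (-(2*δ)^2/4))
              * ENNReal.ofReal ε
              * ENNReal.ofReal ((NoGlob.CSeq p c₀ c₁ k * s ^ (-(1:ℝ)/2)
                * (Real.log s - k * Real.log 4) ^ (NoGlob.mSeq p k)) ^ p) := by
            rw [← ENNReal.ofReal_mul (by positivity), ← ENNReal.ofReal_mul (by positivity)]
        _ ≤ ENNReal.ofReal (heatKernel1 (t-s) (x-y)) * ENNReal.ofReal (a y) * v s y ^ p :=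
            mul_le_mul' (mul_le_mul' (ENNReal.ofReal_le_ofReal hker)
              (ENNReal.ofReal_le_ofReal (hIa y hy))) hvp
      -- inner y-integral
      have hinner : ∀ s ∈ Set.Ioo ((4:ℝ)^k) (t/2),
          ENNReal.ofReal ((E * t ^ (-(1:ℝ)/2) * NoGlob.CSeq p c₀ c₁ k ^ p) * (2*δ))
            * ENNReal.ofReal ((Real.log s - k * Real.log 4) ^ q / s)
          ≤ ∫⁻ y in Set.Icc (b-δ) (b+δ),
              ENNReal.ofReal (heatKernel1 (t-s) (x-y)) * ENNReal.ofReal (a y) * v s y ^ p := by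
        intro s hs
        have hs0 : (0:ℝ) < s := lt_trans h4k hs.1
        have hlog0 : 0 ≤ Real.log s - k * Real.log 4 := by
          have h := Real.log_le_log h4k hs.1.le
          rw [Real.log_pow] at h
          linarith
        have hXnn : (0:ℝ) ≤ E * t ^ (-(1:ℝ)/2) * NoGlob.CSeq p c₀ c₁ k ^ p := by positivity
        have hgs : 0 ≤ (Real.log s - (k:ℝ) * Real.log 4) ^ q / s :=
          div_nonneg (Real.rpow_nonneg hlog0 _) hs0.le
        calc ENNReal.ofReal ((E * t ^ (-(1:ℝ)/2) * NoGlob.CSeq p c₀ c₁ k ^ p) * (2*δ))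
              * ENNReal.ofReal ((Real.log s - k * Real.log 4) ^ q / s)
            = ENNReal.ofReal ((E * t ^ (-(1:ℝ)/2) * NoGlob.CSeq p c₀ c₁ k ^ p)
                * ((Real.log s - k * Real.log 4) ^ q / s)) * volume (Set.Icc (b-δ) (b+δ)) := by
              rw [Real.volume_Icc, show b+δ-(b-δ) = 2*δ by ring,
                ← ENNReal.ofReal_mul (mul_nonneg hXnn (by positivity)),
                ← ENNReal.ofReal_mul (mul_nonneg hXnn hgs)]
              congr 1
              ring
        _ = ∫⁻ _ in Set.Icc (b-δ) (b+δ),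
              ENNReal.ofReal ((E * t ^ (-(1:ℝ)/2) * NoGlob.CSeq p c₀ c₁ k ^ p)
                * ((Real.log s - k * Real.log 4) ^ q / s)) := (setLIntegral_const _ _).symm
        _ ≤ _ := NoGlob.setLIntegral_mono_on measurableSet_Icc (hpt s hs)
      -- outer s-integral
      have houter : ENNReal.ofReal ((E * t ^ (-(1:ℝ)/2) * NoGlob.CSeq p c₀ c₁ k ^ p) * (2*δ))
            * ENNReal.ofReal ((Real.log (t/2) - k * Real.log 4) ^ (q+1) / (q+1))
          ≤ ∫⁻ s in Set.Ioo ((4:ℝ)^k) (t/2), ∫⁻ y in Set.Icc (b-δ) (b+δ),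
              ENNReal.ofReal (heatKernel1 (t-s) (x-y)) * ENNReal.ofReal (a y) * v s y ^ p := by
        have hl := NoGlob.lint_log_rpow (T := (4:ℝ)^k) (M := t/2) h4k hTM.le hq0
        rw [Real.log_pow] at hl
        calc ENNReal.ofReal ((E * t ^ (-(1:ℝ)/2) * NoGlob.CSeq p c₀ c₁ k ^ p) * (2*δ))
              * ENNReal.ofReal ((Real.log (t/2) - k * Real.log 4) ^ (q+1) / (q+1))
            ≤ ENNReal.ofReal ((E * t ^ (-(1:ℝ)/2) * NoGlob.CSeq p c₀ c₁ k ^ p) * (2*δ))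
              * ∫⁻ s in Set.Ioo ((4:ℝ)^k) (t/2),
                  ENNReal.ofReal ((Real.log s - k * Real.log 4) ^ q / s) :=
            mul_le_mul_right hl _
        _ = ∫⁻ s in Set.Ioo ((4:ℝ)^k) (t/2),
              ENNReal.ofReal ((E * t ^ (-(1:ℝ)/2) * NoGlob.CSeq p c₀ c₁ k ^ p) * (2*δ))
              * ENNReal.ofReal ((Real.log s - k * Real.log 4) ^ q / s) :=
            (lintegral_const_mul' _ _ ENNReal.ofReal_ne_top).symm
        _ ≤ _ := NoGlob.setLIntegral_mono_on measurableSet_Ioo hinner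
      refine le_trans (le_trans ?_ (mul_le_mul_right houter (ENNReal.ofReal κ)))
        (hduh t x ((4:ℝ)^k) (t/2) (b-δ) (b+δ) ht0 h4k.le (by linarith))
      -- final real inequality
      rw [← ENNReal.ofReal_mul (by positivity), ← ENNReal.ofReal_mul hκ.le]
      apply ENNReal.ofReal_le_ofReal
      have hX0 : 0 ≤ Real.log t - (k+1 : ℕ) * Real.log 4 := by
        have h := Real.log_le_log (by positivity : (0:ℝ) < 4^(k+1)) ht
        rw [Real.log_pow] at h
        push_cast at h ⊢
        linarith
      have hXY : Real.log t - (k+1 : ℕ) * Real.log 4 ≤ Real.log (t/2) - k * Real.log 4 := by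
        rw [Real.log_div ht0.ne' (by norm_num)]
        have h24 : Real.log 2 ≤ Real.log 4 := Real.log_le_log (by norm_num) (by norm_num)
        push_cast
        linarith
      have hm1 : NoGlob.mSeq p (k+1) = q + 1 := by
        simp only [NoGlob.mSeq, hqdef]
      have hpow : (Real.log t - (k+1 : ℕ) * Real.log 4) ^ (NoGlob.mSeq p (k+1))
          ≤ (Real.log (t/2) - k * Real.log 4) ^ (NoGlob.mSeq p (k+1)) :=
        Real.rpow_le_rpow hX0 hXY (NoGlob.mSeq_nonneg hp0 _)
      have hC1 : NoGlob.CSeq p c₀ c₁ (k+1) = c₁ * NoGlob.CSeq p c₀ c₁ k ^ p / (q+1) := by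
        simp only [NoGlob.CSeq, hqdef]
      rw [hC1, hm1, hc₁def]
      have hcoef : (0:ℝ) ≤ κ * E * (2*δ) * NoGlob.CSeq p c₀ c₁ k ^ p / (q+1)
          * t ^ (-(1:ℝ)/2) := by positivity
      calc κ * E * (2*δ) * NoGlob.CSeq p c₀ c₁ k ^ p / (q+1) * t ^ (-(1:ℝ)/2)
            * (Real.log t - (k+1 : ℕ) * Real.log 4) ^ (q+1)
          = (κ * E * (2*δ) * NoGlob.CSeq p c₀ c₁ k ^ p / (q+1) * t ^ (-(1:ℝ)/2))
            * (Real.log t - (k+1 : ℕ) * Real.log 4) ^ (q+1) := by ring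
      _ ≤ (κ * E * (2*δ) * NoGlob.CSeq p c₀ c₁ k ^ p / (q+1) * t ^ (-(1:ℝ)/2))
            * (Real.log (t/2) - k * Real.log 4) ^ (q+1) := by
          exact mul_le_mul_of_nonneg_left (hm1 ▸ hpow) hcoef
      _ = κ * ((E * t ^ (-(1:ℝ)/2) * NoGlob.CSeq p c₀ c₁ k ^ p) * (2*δ)
            * ((Real.log (t/2) - k * Real.log 4) ^ (q+1) / (q+1))) := by ring
  -- phase 1 conclusion: v exceeds any constant on some window [T,T+2]
  have hwindow : ∀ A : ℝ, ∃ T : ℝ, 1 ≤ T ∧ ∀ t ∈ Set.Icc T (T+2), ∀ x ∈ Set.Icc (b-δ) (b+δ),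
      ENNReal.ofReal A ≤ v t x := by
    intro A
    obtain ⟨k, hk1, hkA⟩ := NoGlob.CSeq_unbounded hp1 hp2 hc₀ hc₁ A
    refine ⟨(16:ℝ)^k, one_le_pow₀ (by norm_num), ?_⟩
    intro t ht x hx
    have h16k : (1:ℝ) ≤ 16^k := one_le_pow₀ (by norm_num)
    have h16k0 : (0:ℝ) < 16^k := by positivity
    have ht0 : (0:ℝ) < t := by linarith [ht.1]
    have ht4 : (4:ℝ)^k ≤ t :=
      le_trans (pow_le_pow_left₀ (by norm_num) (by norm_num) k) ht.1
    refine le_trans (ENNReal.ofReal_le_ofReal (le_trans hkA ?_)) (hPhase1 k t ht4 x hx)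
    have hCk := NoGlob.CSeq_pos hp0 hc₀ hc₁ k
    have hm0 := NoGlob.mSeq_nonneg hp0 k
    have hl4 : (0:ℝ) < Real.log 4 := Real.log_pos (by norm_num)
    have h1 : t ^ (-(1:ℝ)/2) ≥ ((16:ℝ)^k + 2) ^ (-(1:ℝ)/2) :=
      NoGlob.rpow_negHalf_anti ht0 (by linarith [ht.2])
    have hlogt : (k : ℝ) * Real.log 4 ≤ Real.log t - k * Real.log 4 := by
      have h := Real.log_le_log h16k0 ht.1
      rw [show (16:ℝ) = 4^2 by norm_num, ← pow_mul, Real.log_pow] at h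
      push_cast at h
      nlinarith
    have h2 : ((k:ℝ) * Real.log 4) ^ (NoGlob.mSeq p k)
        ≤ (Real.log t - k * Real.log 4) ^ (NoGlob.mSeq p k) := by
      apply Real.rpow_le_rpow (by positivity) hlogt hm0
    have hk0R : (0:ℝ) < (k:ℝ) := by exact_mod_cast Nat.pos_of_ne_zero (by omega)
    exact mul_le_mul (mul_le_mul_of_nonneg_left h1 hCk.le) h2 (by positivity)
      (by positivity)
  -- phase 2 constants
  set q₂ : ℝ := 2 * Real.exp (-(1:ℝ)/4) * (8*Real.pi)^(-(1:ℝ)/2) with hq₂def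
  have hq₂ : 0 < q₂ := by positivity
  set c₆ : ℝ := κ * ε * q₂ * (δ/4) with hc₆def
  have hc₆ : 0 < c₆ := by positivity
  have hp1' : (0:ℝ) < p - 1 := by linarith
  set Hc : ℝ := Real.log 4 / (p-1) with hHcdef
  set Gc : ℝ := (max 0 (-Real.log c₆) + Hc) / (p-1) with hGcdef
  have hl4 : (0:ℝ) < Real.log 4 := Real.log_pos (by norm_num)
  have hHc : 0 < Hc := div_pos hl4 hp1'
  have hGc : 0 ≤ Gc := div_nonneg (by positivity) hp1'.le
  have heH : (p-1) * Hc = Real.log 4 := by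
    rw [hHcdef]; field_simp
  have heG : (p-1) * Gc = max 0 (-Real.log c₆) + Hc := by
    rw [hGcdef]; field_simp
  obtain ⟨T, hT1, hTv⟩ := hwindow (Real.exp Gc)
  -- phase 2 induction
  have hQ : ∀ j : ℕ, ∀ t ∈ Set.Icc (T + 2 - 2*(1/2:ℝ)^j) (T+2),
      ∀ x ∈ Set.Icc (b - (δ/2 + (δ/2)*(1/2:ℝ)^j)) (b + (δ/2 + (δ/2)*(1/2:ℝ)^j)),
      ENNReal.ofReal (Real.exp (Gc + j*Hc)) ≤ v t x := by
    intro j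
    induction j with
    | zero =>
      intro t ht x hx
      simp only [pow_zero, mul_one, Nat.cast_zero, zero_mul, add_zero] at ht hx ⊢
      exact hTv t ⟨by linarith [ht.1], ht.2⟩ x ⟨by linarith [hx.1], by linarith [hx.2]⟩
    | succ j ihj =>
      intro t ht x hx
      have hpj0 : (0:ℝ) < (1/2:ℝ)^j := by positivity
      have hpj1 : ((1/2:ℝ))^j ≤ 1 := pow_le_one₀ (by norm_num) (by norm_num)
      have hpjs : ((1/2:ℝ))^(j+1) = (1/2:ℝ)^j / 2 := by rw [pow_succ]; ring
      rw [hpjs] at ht hx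
      have ht0 : (0:ℝ) < t := by linarith [ht.1]
      set r : ℝ := (δ/4) * (1/2:ℝ)^j with hrdef
      have hr0 : 0 < r := by positivity
      have hr1 : r ≤ 1 := by
        rw [hrdef]; nlinarith
      -- pointwise bound on the region
      have hpt2 : ∀ s ∈ Set.Ioo (T + 2 - 2*(1/2:ℝ)^j) (T + 2 - (1/2:ℝ)^j),
          ∀ y ∈ Set.Icc (x-r) (x+r),
          ENNReal.ofReal (heatKernel1 (t-s) (x-y))
            * ENNReal.ofReal (ε * Real.exp (Gc + j*Hc) ^ p)
          ≤ ENNReal.ofReal (heatKernel1 (t-s) (x-y)) * ENNReal.ofReal (a y) * v s y ^ p := by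
        intro s hs y hy
        have hyI : y ∈ Set.Icc (b - (δ/2 + (δ/2)*(1/2:ℝ)^j)) (b + (δ/2 + (δ/2)*(1/2:ℝ)^j)) := by
          constructor
          · have h1 := hy.1; have h2 := hx.1; rw [hrdef] at h1; linarith
          · have h1 := hy.2; have h2 := hx.2; rw [hrdef] at h1; linarith
        have hyI' : y ∈ Set.Icc (b-δ) (b+δ) := by
          have h1 := hyI.1; have h2 := hyI.2
          constructor
          · have : (δ/2) * (1/2:ℝ)^j ≤ δ/2 := by nlinarith
            linarith
          · have : (δ/2) * (1/2:ℝ)^j ≤ δ/2 := by nlinarith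
            linarith
        have hsIcc : s ∈ Set.Icc (T + 2 - 2*(1/2:ℝ)^j) (T+2) :=
          ⟨hs.1.le, by linarith [hs.2]⟩
        have hv := ihj s hsIcc y hyI
        have hvp : ENNReal.ofReal (Real.exp (Gc + j*Hc) ^ p) ≤ v s y ^ p := by
          rw [← ENNReal.ofReal_rpow_of_nonneg (Real.exp_pos _).le hp0]
          exact ENNReal.rpow_le_rpow hv hp0
        have hay := hIa y hyI'
        rw [mul_assoc]
        apply mul_le_mul_right
        rw [ENNReal.ofReal_mul hε.le]
        exact mul_le_mul' (ENNReal.ofReal_le_ofReal hay) hvp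
      -- inner mass bound
      have hinner2 : ∀ s ∈ Set.Ioo (T + 2 - 2*(1/2:ℝ)^j) (T + 2 - (1/2:ℝ)^j),
          ENNReal.ofReal (q₂ * r) * ENNReal.ofReal (ε * Real.exp (Gc + j*Hc) ^ p)
          ≤ ∫⁻ y in Set.Icc (x-r) (x+r),
              ENNReal.ofReal (heatKernel1 (t-s) (x-y)) * ENNReal.ofReal (a y) * v s y ^ p := by
        intro s hs
        have hτ0 : 0 < t - s := by
          have := hs.2; have := ht.1; linarith
        have hτ2 : t - s ≤ 2 := by
          have := hs.1; have := ht.2; linarith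
        have hmass := NoGlob.mass_lb (x := x) hτ0 hτ2 hr0 hr1
        calc ENNReal.ofReal (q₂ * r) * ENNReal.ofReal (ε * Real.exp (Gc + j*Hc) ^ p)
            ≤ (∫⁻ y in Set.Icc (x-r) (x+r), ENNReal.ofReal (heatKernel1 (t-s) (x-y)))
              * ENNReal.ofReal (ε * Real.exp (Gc + j*Hc) ^ p) := by
              apply mul_le_mul_left
              rw [hq₂def]
              exact hmass
        _ = ∫⁻ y in Set.Icc (x-r) (x+r), ENNReal.ofReal (heatKernel1 (t-s) (x-y))
              * ENNReal.ofReal (ε * Real.exp (Gc + j*Hc) ^ p) :=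
            (lintegral_mul_const' _ _ ENNReal.ofReal_ne_top).symm
        _ ≤ _ := NoGlob.setLIntegral_mono_on measurableSet_Icc (hpt2 s hs)
      -- assemble
      have houter2 : ENNReal.ofReal (q₂ * r) * ENNReal.ofReal (ε * Real.exp (Gc + j*Hc) ^ p)
            * ENNReal.ofReal ((1/2:ℝ)^j)
          ≤ ∫⁻ s in Set.Ioo (T + 2 - 2*(1/2:ℝ)^j) (T + 2 - (1/2:ℝ)^j),
              ∫⁻ y in Set.Icc (x-r) (x+r),
                ENNReal.ofReal (heatKernel1 (t-s) (x-y)) * ENNReal.ofReal (a y) * v s y ^ p := by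
        calc ENNReal.ofReal (q₂ * r) * ENNReal.ofReal (ε * Real.exp (Gc + j*Hc) ^ p)
              * ENNReal.ofReal ((1/2:ℝ)^j)
            = ENNReal.ofReal (q₂ * r) * ENNReal.ofReal (ε * Real.exp (Gc + j*Hc) ^ p)
              * volume (Set.Ioo (T + 2 - 2*(1/2:ℝ)^j) (T + 2 - (1/2:ℝ)^j)) := by
              rw [Real.volume_Ioo, show T + 2 - (1/2:ℝ)^j - (T + 2 - 2*(1/2:ℝ)^j) = (1/2:ℝ)^j
                by ring]
        _ = ∫⁻ _ in Set.Ioo (T + 2 - 2*(1/2:ℝ)^j) (T + 2 - (1/2:ℝ)^j),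
              ENNReal.ofReal (q₂ * r) * ENNReal.ofReal (ε * Real.exp (Gc + j*Hc) ^ p) :=
            (setLIntegral_const _ _).symm
        _ ≤ _ := NoGlob.setLIntegral_mono_on measurableSet_Ioo hinner2
      refine le_trans (le_trans ?_ (mul_le_mul_right houter2 (ENNReal.ofReal κ)))
        (hduh t x (T + 2 - 2*(1/2:ℝ)^j) (T + 2 - (1/2:ℝ)^j) (x-r) (x+r) ht0
          (by linarith) (by linarith [ht.1]))
      -- real inequality via phase2_step_real
      rw [← ENNReal.ofReal_mul (by positivity), ← ENNReal.ofReal_mul (by positivity),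
        ← ENNReal.ofReal_mul hκ.le]
      apply ENNReal.ofReal_le_ofReal
      have hstep := NoGlob.phase2_step_real hp1 hc₆ heH heG j
      have h14 : ((1/4:ℝ))^j = (1/2:ℝ)^j * (1/2:ℝ)^j := by
        rw [← mul_pow]; norm_num
      rw [hc₆def, h14] at hstep
      calc Real.exp (Gc + (j+1 : ℕ)*Hc)
          = Real.exp (Gc + ((j:ℝ)+1)*Hc) := by push_cast; ring_nf
      _ ≤ κ * ε * q₂ * (δ/4) * ((1/2:ℝ)^j * (1/2:ℝ)^j) * Real.exp (Gc + j*Hc) ^ p := hstep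
      _ = κ * (q₂ * r * (ε * Real.exp (Gc + j*Hc) ^ p) * (1/2:ℝ)^j) := by
          rw [hrdef]; ring
  -- final contradiction
  have hfinT : v (T+2) b < ⊤ := hfin (T+2) (by linarith) b
  have hbound : ∀ j : ℕ, ENNReal.ofReal (Real.exp (Gc + j*Hc)) ≤ v (T+2) b := by
    intro j
    have hpj0 : (0:ℝ) < (1/2:ℝ)^j := by positivity
    have hpj1 : ((1/2:ℝ))^j ≤ 1 := pow_le_one₀ (by norm_num) (by norm_num)
    refine hQ j (T+2) ⟨by linarith, le_refl _⟩ b ⟨?_, ?_⟩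
    · have : 0 ≤ δ/2 + (δ/2)*(1/2:ℝ)^j := by positivity
      linarith
    · have : 0 ≤ δ/2 + (δ/2)*(1/2:ℝ)^j := by positivity
      linarith
  obtain ⟨j, hj⟩ := exists_nat_ge ((v (T+2) b).toReal / Hc)
  have h1 : (v (T+2) b).toReal ≤ (j:ℝ) * Hc := by
    rw [div_le_iff₀ hHc] at hj
    linarith
  have h2 : (v (T+2) b).toReal < Real.exp (Gc + j*Hc) := by
    have h3 := Real.add_one_le_exp (Gc + j*Hc)
    linarith
  have h4 : v (T+2) b < ENNReal.ofReal (Real.exp (Gc + j*Hc)) := by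
    rw [← ENNReal.ofReal_toReal hfinT.ne]
    exact (ENNReal.ofReal_lt_ofReal_iff (Real.exp_pos _)).2 h2
  exact absurd (hbound j) (not_le.2 h4)
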